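/- Let E be a rearrangement-invariant quasi-Banach function space on (0,∞) with Boyd indices p_E, q_E, and let 0 < p_0 < p_E. Assume either q_E < p_1 < ∞ or p_1 = ∞. Then the continuous embeddings L_{p_0} ∩ L_{p_1} ⊂ E ⊂ L_{p_0} + L_{p_1} hold: there exist constants c, C > 0 with ‖f‖_{L_{p_0}+L_{p_1}} ≤ c ‖f‖_E for all f ∈ E and ‖f‖_E ≤ C max{‖f‖_{p_0}, ‖f‖_{p_1}} for all f ∈ L_{p_0} ∩ L_{p_1}. -/

import Mathlib

open MeasureTheory Set Filter
open scoped ENNReal NNReal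

noncomputable section

/-- The non-increasing rearrangement of a function on `(0, ∞)` (with Lebesgue measure):
`f^*(t) = inf {λ : |{s > 0 : |f(s)| > λ}| ≤ t}`. -/
def rearr (f : ℝ → ℝ) (t : ℝ) : ℝ≥0∞ :=
  sInf {lam : ℝ≥0∞ |
    volume {s : ℝ | 0 < s ∧ lam < ENNReal.ofReal |f s|} ≤ ENNReal.ofReal t}

/-- A rearrangement-invariant quasi-Banach function space on `(0,∞)`, given by the
functional `ρ` on (extended-)nonnegative measurable functions on `(0,∞)`. -/
structure RIQBFS where
  ρ : (ℝ → ℝ≥0∞) → ℝ≥0∞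
  C : ℝ
  one_le_C : 1 ≤ C
  eq_zero_iff : ∀ f : ℝ → ℝ≥0∞, ρ f = 0 ↔ f =ᵐ[volume.restrict (Set.Ioi (0 : ℝ))] 0
  smul_eq : ∀ (c : ℝ≥0) (f : ℝ → ℝ≥0∞), ρ (fun t => (c : ℝ≥0∞) * f t) = (c : ℝ≥0∞) * ρ f
  quasi_triangle : ∀ f g : ℝ → ℝ≥0∞, ρ (fun t => f t + g t) ≤ ENNReal.ofReal C * (ρ f + ρ g)
  mono : ∀ f g : ℝ → ℝ≥0∞,
    (∀ᵐ t ∂(volume.restrict (Set.Ioi (0 : ℝ))), g t ≤ f t) → ρ g ≤ ρ f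
  fatou : ∀ (fn : ℕ → ℝ → ℝ≥0∞) (f : ℝ → ℝ≥0∞),
    (∀ n, ∀ᵐ t ∂(volume.restrict (Set.Ioi (0 : ℝ))), fn n t ≤ fn (n + 1) t) →
    (∀ᵐ t ∂(volume.restrict (Set.Ioi (0 : ℝ))),
      Filter.Tendsto (fun n => fn n t) Filter.atTop (nhds (f t))) →
    Filter.Tendsto (fun n => ρ (fn n)) Filter.atTop (nhds (ρ f))
  indicator_finite : ∀ ω : Set ℝ, MeasurableSet ω → ω ⊆ Set.Ioi (0 : ℝ) → volume ω < ⊤ →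
    ρ (Set.indicator ω fun _ => 1) < ⊤

/-- The quasi-norm of the space `E`: `‖f‖_E = ρ_E (f^*)`. -/
def RIQBFS.normE (E : RIQBFS) (f : ℝ → ℝ) : ℝ≥0∞ := E.ρ (rearr f)

/-- The operator norm of the dilation operator `(D_a f)(t) = f (a t)` on `E`. -/
def dilNorm (E : RIQBFS) (a : ℝ) : ℝ≥0∞ :=
  ⨆ (f : ℝ → ℝ) (_ : Measurable f) (_ : E.normE f ≤ 1), E.normE fun t => f (a * t)

/-- The lower Boyd index
`p_E = sup {p > 0 : ∃ c > 0, ∀ 0 < a < 1, ‖D_a‖ ≤ c a^{-1/p}}` (an element of `(0, ∞]`). -/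
def lowerBoyd (E : RIQBFS) : ℝ≥0∞ :=
  sSup (ENNReal.ofReal ''
    {p : ℝ | 0 < p ∧ ∃ c : ℝ, 0 < c ∧ ∀ a : ℝ, 0 < a → a < 1 →
      dilNorm E a ≤ ENNReal.ofReal (c * a ^ (-(1 / p)))})

/-- The upper Boyd index
`q_E = inf {q > 0 : ∃ c > 0, ∀ a ≥ 1, ‖D_a‖ ≤ c a^{-1/q}}` (an element of `(0, ∞]`,
with `inf ∅ = ∞`). -/
def upperBoyd (E : RIQBFS) : ℝ≥0∞ :=
  sInf (ENNReal.ofReal ''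
    {q : ℝ | 0 < q ∧ ∃ c : ℝ, 0 < c ∧ ∀ a : ℝ, 1 ≤ a →
      dilNorm E a ≤ ENNReal.ofReal (c * a ^ (-(1 / q)))})


/-!
Everything is controlled by the fundamental function `φ(t) = ‖χ_{(0,t)}‖_E`. Testing the
dilations `D_a` on characteristic functions turns the Boyd bounds into growth bounds
`φ(s) ≤ c (s/t)^{1/p} φ(t)` for `s ≥ t` (some `p > p₀`) and `φ(s) ≤ c (s/t)^{1/q} φ(t)` for
`s ≤ t` (some `q < p₁`).

`E ⊂ L_{p₀} + L_{p₁}`: since `f^*(t) φ(t) ≤ ‖f‖_E`, the growth bounds give `f^*(t) ≲ ‖f‖_E t^{-1/p}`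
for `t ≤ 1` and `f^*(t) ≲ ‖f‖_E t^{-1/q}` for `t ≥ 1`, i.e. power decay of the distribution
function of `f` above and below the height `A ≈ ‖f‖_E`. Cutting `f` at `A`, the layer-cake formula
puts the part above `A` into `L_{p₀}` (as `p₀ < p`) and the part below `A` into `L_{p₁}` (as
`q < p₁`; trivially if `p₁ = ∞`).

`L_{p₀} ∩ L_{p₁} ⊂ E`: by Chebyshev, `f^*(u) ≤ M u^{-1/p₁}` on `(0,1)` and `f^*(u) ≤ M u^{-1/p₀}`
on `[1,∞)`, with `M = max (‖f‖_{p₀}, ‖f‖_{p₁})`. Both power functions lie in `E`: they are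
dominated by staircases `∑ aₙ χ_{(0,tₙ)}` with geometric `tₙ` whose pieces have quasi-norms
`aₙ φ(tₙ)` decaying geometrically. For a large enough base this decay beats the powers of the
quasi-triangle constant, and the Fatou property passes to the infinite sum.
-/

def distribution (f : ℝ → ℝ) (lam : ℝ≥0∞) : ℝ≥0∞ :=
  volume {s : ℝ | 0 < s ∧ lam < ENNReal.ofReal |f s|}

lemma distribution_antitone (f : ℝ → ℝ) : Antitone (distribution f) :=
  fun _ _ h => measure_mono fun _ hs => ⟨hs.1, h.trans_lt hs.2⟩

lemma distribution_eq_restrict (f : ℝ → ℝ) (lam : ℝ≥0∞) :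
    distribution f lam = volume.restrict (Ioi 0) {s | lam < ‖f s‖ₑ} := by
  rw [Measure.restrict_apply' measurableSet_Ioi, distribution]
  congr 1
  ext s
  simp [Real.enorm_eq_ofReal_abs, and_comm]

lemma distribution_ofReal (f : ℝ → ℝ) {lam : ℝ} (hlam : 0 ≤ lam) :
    distribution f (ENNReal.ofReal lam) = volume.restrict (Ioi 0) {s | lam < |f s|} := by
  simp [distribution_eq_restrict, Real.enorm_eq_ofReal_abs,
    ENNReal.ofReal_lt_ofReal_iff_of_nonneg hlam]

lemma distribution_le_of_forall_lt (f : ℝ → ℝ) {lam x : ℝ≥0∞}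
    (h : ∀ b, lam < b → distribution f b ≤ x) : distribution f lam ≤ x := by
  rcases eq_or_ne lam ⊤ with rfl | hlam
  · simp [distribution]
  obtain ⟨u, hu_anti, hu_mem, hu_lim⟩ := exists_seq_strictAnti_tendsto' (lt_top_iff_ne_top.2 hlam)
  have hunion : {s : ℝ | 0 < s ∧ lam < ENNReal.ofReal |f s|} =
      ⋃ n, {s | 0 < s ∧ u n < ENNReal.ofReal |f s|} := by
    ext s
    simp only [mem_ofPred_eq, mem_iUnion]
    refine ⟨fun ⟨hs, hlt⟩ => ?_, fun ⟨n, hs, hlt⟩ => ⟨hs, (hu_mem n).1.trans hlt⟩⟩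
    obtain ⟨n, hn⟩ := (hu_lim.eventually (gt_mem_nhds hlt)).exists
    exact ⟨n, hs, hn⟩
  have hmono : Monotone fun n => {s : ℝ | 0 < s ∧ u n < ENNReal.ofReal |f s|} :=
    fun m n hmn s hs => ⟨hs.1, (hu_anti.antitone hmn).trans_lt hs.2⟩
  rw [distribution, hunion, hmono.measure_iUnion]
  exact iSup_le fun n => h _ (hu_mem n).1

lemma rearr_le_iff {f : ℝ → ℝ} {t : ℝ} {lam : ℝ≥0∞} :
    rearr f t ≤ lam ↔ distribution f lam ≤ ENNReal.ofReal t := by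
  refine ⟨fun h => distribution_le_of_forall_lt f fun b hb => ?_, fun h => sInf_le h⟩
  obtain ⟨b', hb', hb'b⟩ := sInf_lt_iff.1 (h.trans_lt hb)
  exact (distribution_antitone f hb'b.le).trans hb'

lemma rearr_antitone (f : ℝ → ℝ) : Antitone (rearr f) := fun _ _ h =>
  rearr_le_iff.2 ((rearr_le_iff.1 le_rfl).trans (ENNReal.ofReal_le_ofReal h))

lemma distribution_indicator_Ioo (t c : ℝ) (lam : ℝ≥0∞) :
    distribution (indicator (Ioo 0 t) fun _ => c) lam =
      if lam < ENNReal.ofReal |c| then ENNReal.ofReal t else 0 := by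
  have hset : {s : ℝ | 0 < s ∧ lam < ENNReal.ofReal |indicator (Ioo 0 t) (fun _ => c) s|} =
      if lam < ENNReal.ofReal |c| then Ioo 0 t else ∅ := by
    ext s
    by_cases hs : s ∈ Ioo 0 t <;> split_ifs <;> simp_all
  rw [distribution, hset]
  split_ifs <;> simp

lemma rearr_indicator_Ioo (t c : ℝ) {u : ℝ} (hu : 0 < u) :
    rearr (indicator (Ioo 0 t) fun _ => c) u =
      indicator (Ioo 0 t) (fun _ => ENNReal.ofReal |c|) u := by
  refine eq_of_forall_ge_iff fun x => ?_
  rw [rearr_le_iff, distribution_indicator_Ioo]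
  by_cases hut : u < t
  · have : ¬ ENNReal.ofReal t ≤ ENNReal.ofReal u := by
      rw [not_le, ENNReal.ofReal_lt_ofReal_iff (hu.trans hut)]
      exact hut
    rw [indicator_of_mem (show u ∈ Ioo 0 t from ⟨hu, hut⟩)]
    split_ifs with h
    · simp [this, h]
    · simp [not_lt.1 h]
  · rw [indicator_of_notMem fun h => hut h.2]
    split_ifs <;> simp [ENNReal.ofReal_le_ofReal (not_lt.1 hut)]

lemma rearr_le_eLpNorm_mul_rpow {f : ℝ → ℝ} (hf : AEStronglyMeasurable f (volume.restrict (Ioi 0)))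
    {p : ℝ≥0∞} (hp : p ≠ 0) {t : ℝ} (ht : 0 < t) :
    rearr f t ≤ eLpNorm f p (volume.restrict (Ioi 0)) * ENNReal.ofReal (t ^ (-p⁻¹.toReal)) := by
  set μ := volume.restrict (Ioi (0 : ℝ))
  rw [rearr_le_iff]
  refine distribution_le_of_forall_lt f fun b hb => ?_
  rw [distribution_eq_restrict]
  rcases eq_or_ne p ⊤ with rfl | hp_top
  · simp only [ENNReal.inv_top, ENNReal.toReal_zero, neg_zero, Real.rpow_zero,
      ENNReal.ofReal_one, mul_one, eLpNorm_exponent_top] at hb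
    exact (measure_mono fun s hs => hb.trans hs).trans (meas_eLpNormEssSup_lt (μ := μ)).le
      |>.trans zero_le
  rcases eq_or_ne b ⊤ with rfl | hb_top
  · simp
  set r := p.toReal
  have hr : 0 < r := ENNReal.toReal_pos hp hp_top
  have hb0 : b ≠ 0 := (zero_le.trans_lt hb).ne'
  rw [ENNReal.toReal_inv] at hb
  have hM : eLpNorm f p μ ≤ b * ENNReal.ofReal (t ^ r⁻¹) := by
    calc eLpNorm f p μ
        = eLpNorm f p μ * ENNReal.ofReal (t ^ (-r⁻¹)) * ENNReal.ofReal (t ^ r⁻¹) := by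
          rw [mul_assoc, ← ENNReal.ofReal_mul (by positivity), ← Real.rpow_add ht,
            neg_add_cancel, Real.rpow_zero, ENNReal.ofReal_one, mul_one]
      _ ≤ b * ENNReal.ofReal (t ^ r⁻¹) := by gcongr
  have hbr0 : b ^ r ≠ 0 := (ENNReal.rpow_pos (pos_iff_ne_zero.2 hb0) hb_top).ne'
  have hbrt : b ^ r ≠ ⊤ := ENNReal.rpow_ne_top_of_nonneg hr.le hb_top
  refine (measure_mono fun s (hs : b < ‖f s‖ₑ) => hs.le).trans ?_
  refine (ENNReal.mul_le_mul_iff_right hbr0 hbrt).1 ?_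
  calc b ^ r * μ {s | b ≤ ‖f s‖ₑ} ≤ eLpNorm f p μ ^ r :=
        mul_meas_ge_le_pow_eLpNorm' μ hp hp_top hf b
    _ ≤ (b * ENNReal.ofReal (t ^ r⁻¹)) ^ r := by gcongr
    _ = b ^ r * ENNReal.ofReal t := by
        rw [ENNReal.mul_rpow_of_nonneg _ _ hr.le,
          ENNReal.ofReal_rpow_of_nonneg (by positivity) hr.le,
          ← Real.rpow_mul ht.le, inv_mul_cancel₀ hr.ne', Real.rpow_one]

lemma mul_div_rpow_rpow_neg_one_div {A lam p : ℝ} (hA : 0 < A) (hlam : 0 < lam) (hp : p ≠ 0) :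
    A * ((A / lam) ^ p) ^ (-(1 / p)) = lam := by
  rw [← Real.rpow_mul (by positivity), mul_neg, mul_one_div_cancel hp, Real.rpow_neg_one, inv_div,
    mul_div_cancel₀ _ hA.ne']

namespace RIQBFS

variable (E : RIQBFS)

lemma ρ_congr {f g : ℝ → ℝ≥0∞} (h : f =ᵐ[volume.restrict (Ioi 0)] g) : E.ρ f = E.ρ g :=
  le_antisymm (E.mono g f (h.mono fun _ ht => ht.le)) (E.mono f g (h.mono fun _ ht => ht.ge))

lemma ρ_zero : E.ρ (fun _ => 0) = 0 :=
  (E.eq_zero_iff _).2 (ae_of_all _ fun _ => rfl)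

lemma ρ_const_mul (x : ℝ≥0∞) (f : ℝ → ℝ≥0∞) : E.ρ (fun t => x * f t) = x * E.ρ f := by
  have hnat (n : ℕ) : E.ρ (fun t => (n : ℝ≥0∞) * f t) = n * E.ρ f := by
    exact_mod_cast E.smul_eq n f
  rcases eq_or_ne x ⊤ with rfl | hx
  · -- `⊤ * f` is the increasing limit of `n * f`, so Fatou's property applies.
    have hlim (a : ℝ≥0∞) : Tendsto (fun n : ℕ => (n : ℝ≥0∞) * a) atTop (nhds (⊤ * a)) :=
      ENNReal.Tendsto.mul_const ENNReal.tendsto_nat_nhds_top (Or.inl ENNReal.top_ne_zero)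
    have hfatou := E.fatou (fun n t => n * f t) (fun t => ⊤ * f t)
      (fun n => ae_of_all _ fun t => by gcongr; exact_mod_cast n.le_succ)
      (ae_of_all _ fun t => hlim (f t))
    simp only [hnat] at hfatou
    exact tendsto_nhds_unique hfatou (hlim _)
  · lift x to ℝ≥0 using hx
    exact E.smul_eq x f

lemma ρ_sum_range_le (w : ℕ → ℝ → ℝ≥0∞) (n : ℕ) :
    E.ρ (fun t => ∑ k ∈ Finset.range n, w k t) ≤
      ∑ k ∈ Finset.range n, ENNReal.ofReal E.C ^ (k + 1) * E.ρ (w k) := by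
  induction n generalizing w with
  | zero => simpa using (E.ρ_zero).le
  | succ n ih =>
    simp only [Finset.sum_range_succ']
    calc E.ρ (fun t => ∑ k ∈ Finset.range n, w (k + 1) t + w 0 t)
        ≤ ENNReal.ofReal E.C * (E.ρ (fun t => ∑ k ∈ Finset.range n, w (k + 1) t) + E.ρ (w 0)) :=
          E.quasi_triangle _ _
      _ ≤ ENNReal.ofReal E.C *
          (∑ k ∈ Finset.range n, ENNReal.ofReal E.C ^ (k + 1) * E.ρ (w (k + 1)) + E.ρ (w 0)) := by
          gcongr
          exact ih fun k => w (k + 1)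
      _ = _ := by
          rw [mul_add, Finset.mul_sum]
          simp only [pow_succ, pow_zero, one_mul]
          congr 1
          exact Finset.sum_congr rfl fun k _ => by ring

lemma ρ_tsum_le (w : ℕ → ℝ → ℝ≥0∞) :
    E.ρ (fun t => ∑' k, w k t) ≤ ∑' k, ENNReal.ofReal E.C ^ (k + 1) * E.ρ (w k) := by
  have hfatou := E.fatou (fun n t => ∑ k ∈ Finset.range n, w k t) (fun t => ∑' k, w k t)
    (fun n => ae_of_all _ fun t => by simp [Finset.sum_range_succ])
    (ae_of_all _ fun t => ENNReal.tendsto_nat_tsum _)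
  exact le_of_tendsto' hfatou fun n => (E.ρ_sum_range_le w n).trans (ENNReal.sum_le_tsum _)

lemma ρ_tsum_lt_top {w : ℕ → ℝ → ℝ≥0∞} {D r : ℝ≥0∞} (hD : D ≠ ⊤)
    (hw : ∀ k, E.ρ (w k) ≤ D * r ^ k) (hr : ENNReal.ofReal E.C * r < 1) :
    E.ρ (fun t => ∑' k, w k t) < ⊤ := by
  refine (E.ρ_tsum_le w).trans_lt ?_
  calc ∑' k, ENNReal.ofReal E.C ^ (k + 1) * E.ρ (w k)
      ≤ ∑' k, ENNReal.ofReal E.C ^ (k + 1) * (D * r ^ k) := by gcongr with k; exact hw k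
    _ = ENNReal.ofReal E.C * D * ∑' k, (ENNReal.ofReal E.C * r) ^ k := by
        rw [← ENNReal.tsum_mul_left]
        exact tsum_congr fun k => by ring
    _ < ⊤ := ENNReal.mul_lt_top (by finiteness) (tsum_geometric_lt_top.2 hr)

/-- The fundamental function `φ_E(t) = ‖χ_{(0,t)}‖_E`. -/
def φ (t : ℝ) : ℝ≥0∞ := E.ρ (indicator (Ioo 0 t) fun _ => 1)

lemma φ_lt_top (t : ℝ) : E.φ t < ⊤ :=
  E.indicator_finite _ measurableSet_Ioo (fun _ hs => hs.1) (by simp [Real.volume_Ioo])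

lemma φ_pos {t : ℝ} (ht : 0 < t) : 0 < E.φ t := by
  refine pos_iff_ne_zero.2 fun h => ?_
  have hzero := ae_restrict_of_ae_restrict_of_subset (s := Ioo 0 t) (fun _ hs => hs.1)
    ((E.eq_zero_iff _).1 h)
  have : (ae (volume.restrict (Ioo 0 t))).NeBot := ae_neBot.2 (by simp [ht])
  obtain ⟨s, hs, h0⟩ := ((ae_restrict_mem measurableSet_Ioo).and hzero).exists
  simp [indicator_of_mem hs] at h0

lemma ρ_indicator_Ioc (t : ℝ) : E.ρ (indicator (Ioc 0 t) fun _ => 1) = E.φ t :=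
  E.ρ_congr (EventuallyEq.symm (ae_restrict_of_ae (indicator_ae_eq_of_ae_eq_set Ioo_ae_eq_Ioc)))

lemma ρ_indicator_Iio (t : ℝ) : E.ρ (indicator (Iio t) fun _ => 1) = E.φ t :=
  E.ρ_congr <| ae_restrict_of_forall_mem measurableSet_Ioi fun s (hs : 0 < s) => by
    simp [indicator_apply, hs]

lemma normE_indicator_Ioo (t c : ℝ) :
    E.normE (indicator (Ioo 0 t) fun _ => c) = ENNReal.ofReal |c| * E.φ t := by
  rw [normE, φ, ← ρ_const_mul]
  exact E.ρ_congr <| ae_restrict_of_forall_mem measurableSet_Ioi fun u hu => by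
    simp [rearr_indicator_Ioo t c hu, indicator_apply]

lemma φ_div_le {a t : ℝ} (ha : 0 < a) (ht : 0 < t) : E.φ (t / a) ≤ dilNorm E a * E.φ t := by
  set c := (E.φ t).toReal⁻¹
  have hc : ENNReal.ofReal |c| * E.φ t = 1 := by
    rw [abs_of_nonneg (by positivity), ENNReal.ofReal_inv_of_pos
      (ENNReal.toReal_pos (E.φ_pos ht).ne' (E.φ_lt_top t).ne), ENNReal.ofReal_toReal
      (E.φ_lt_top t).ne, ENNReal.inv_mul_cancel (E.φ_pos ht).ne' (E.φ_lt_top t).ne]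
  have hdil : (fun s => indicator (Ioo 0 t) (fun _ => c) (a * s)) =
      indicator (Ioo 0 (t / a)) fun _ => c := by
    ext s
    simp [indicator_apply, lt_div_iff₀ ha, mul_comm s, ha]
  have hle : E.normE (fun s => indicator (Ioo 0 t) (fun _ => c) (a * s)) ≤ dilNorm E a :=
    le_iSup₂_of_le (indicator (Ioo 0 t) fun _ => c)
      (measurable_const.indicator measurableSet_Ioo)
      (le_iSup_of_le (by rw [normE_indicator_Ioo, hc]) le_rfl)
  rw [hdil, normE_indicator_Ioo] at hle
  calc E.φ (t / a) = ENNReal.ofReal |c| * E.φ (t / a) * E.φ t := by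
        rw [mul_right_comm, hc, one_mul]
    _ ≤ dilNorm E a * E.φ t := by gcongr

lemma exists_lowerBoyd_bound {p0 : ℝ} (hp0 : 0 < p0) (h : ENNReal.ofReal p0 < lowerBoyd E) :
    ∃ p c : ℝ, p0 < p ∧ 1 ≤ c ∧
      ∀ a : ℝ, 0 < a → a < 1 → dilNorm E a ≤ ENNReal.ofReal (c * a ^ (-(1 / p))) := by
  obtain ⟨_, ⟨p, ⟨-, c, -, hc⟩, rfl⟩, hlt⟩ := lt_sSup_iff.1 h
  refine ⟨p, max c 1, (ENNReal.ofReal_lt_ofReal_iff_of_nonneg hp0.le).1 hlt, le_max_right _ _,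
    fun a ha ha1 => (hc a ha ha1).trans (ENNReal.ofReal_le_ofReal ?_)⟩
  gcongr
  exact le_max_left _ _

lemma exists_upperBoyd_bound {p1 : ℝ≥0∞} (h : upperBoyd E < p1) :
    ∃ q c : ℝ, 0 < q ∧ ENNReal.ofReal q < p1 ∧
      ∀ a : ℝ, 1 ≤ a → dilNorm E a ≤ ENNReal.ofReal (c * a ^ (-(1 / q))) := by
  obtain ⟨_, ⟨q, ⟨hq, c, -, hc⟩, rfl⟩, hlt⟩ := sInf_lt_iff.1 h
  exact ⟨q, c, hq, hlt, hc⟩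

lemma φ_le_of_lowerBoyd {p c : ℝ} (hc : 1 ≤ c)
    (hlow : ∀ a : ℝ, 0 < a → a < 1 → dilNorm E a ≤ ENNReal.ofReal (c * a ^ (-(1 / p))))
    {s t : ℝ} (ht : 0 < t) (hts : t ≤ s) :
    E.φ s ≤ ENNReal.ofReal (c * (s / t) ^ (1 / p)) * E.φ t := by
  rcases hts.eq_or_lt with rfl | hts
  · rw [div_self ht.ne', Real.one_rpow, mul_one]
    exact le_mul_of_one_le_left zero_le (ENNReal.one_le_ofReal.2 hc)
  have hs : 0 < s := ht.trans hts
  calc E.φ s = E.φ (t / (t / s)) := by rw [div_div_cancel₀ ht.ne']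
    _ ≤ dilNorm E (t / s) * E.φ t := E.φ_div_le (by positivity) ht
    _ ≤ ENNReal.ofReal (c * (t / s) ^ (-(1 / p))) * E.φ t := by
        gcongr
        exact hlow _ (by positivity) ((div_lt_one hs).2 hts)
    _ = ENNReal.ofReal (c * (s / t) ^ (1 / p)) * E.φ t := by
        rw [Real.rpow_neg (by positivity), ← Real.inv_rpow (by positivity), inv_div]

lemma φ_le_of_upperBoyd {q c : ℝ}
    (hup : ∀ a : ℝ, 1 ≤ a → dilNorm E a ≤ ENNReal.ofReal (c * a ^ (-(1 / q))))
    {s t : ℝ} (hs : 0 < s) (hst : s ≤ t) :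
    E.φ s ≤ ENNReal.ofReal (c * (s / t) ^ (1 / q)) * E.φ t := by
  have ht : 0 < t := hs.trans_le hst
  calc E.φ s = E.φ (t / (t / s)) := by rw [div_div_cancel₀ ht.ne']
    _ ≤ dilNorm E (t / s) * E.φ t := E.φ_div_le (by positivity) ht
    _ ≤ ENNReal.ofReal (c * (t / s) ^ (-(1 / q))) * E.φ t := by
        gcongr
        exact hup _ ((one_le_div hs).2 hst)
    _ = ENNReal.ofReal (c * (s / t) ^ (1 / q)) * E.φ t := by
        rw [Real.rpow_neg (by positivity), ← Real.inv_rpow (by positivity), inv_div]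

lemma rearr_mul_φ_le (f : ℝ → ℝ) (t : ℝ) : rearr f t * E.φ t ≤ E.ρ (rearr f) := by
  rw [φ, ← ρ_const_mul]
  refine E.mono _ _ (ae_of_all _ fun u => ?_)
  by_cases hu : u ∈ Ioo 0 t
  · simpa [indicator_of_mem hu] using rearr_antitone f hu.2.le
  · simp [indicator_of_notMem hu]

lemma rearr_le_of_φ_one_le {f : ℝ → ℝ} {τ c β A : ℝ} (hτ : 0 < τ)
    (hφ : E.φ 1 ≤ ENNReal.ofReal (c * τ ^ (-β)) * E.φ τ)
    (hA : ENNReal.ofReal c * E.ρ (rearr f) ≤ ENNReal.ofReal A * E.φ 1) :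
    rearr f τ ≤ ENNReal.ofReal (A * τ ^ (-β)) := by
  have hpow : 0 ≤ τ ^ (-β) := by positivity
  refine (ENNReal.mul_le_mul_iff_left (E.φ_pos one_pos).ne' (E.φ_lt_top 1).ne).1 ?_
  calc rearr f τ * E.φ 1 ≤ rearr f τ * (ENNReal.ofReal (c * τ ^ (-β)) * E.φ τ) := by gcongr
    _ = ENNReal.ofReal (τ ^ (-β)) * (ENNReal.ofReal c * (rearr f τ * E.φ τ)) := by
        rw [ENNReal.ofReal_mul' hpow]
        ring
    _ ≤ ENNReal.ofReal (τ ^ (-β)) * (ENNReal.ofReal c * E.ρ (rearr f)) := by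
        gcongr
        exact E.rearr_mul_φ_le f τ
    _ ≤ ENNReal.ofReal (τ ^ (-β)) * (ENNReal.ofReal A * E.φ 1) := by gcongr
    _ = ENNReal.ofReal (A * τ ^ (-β)) * E.φ 1 := by
        rw [ENNReal.ofReal_mul' hpow]
        ring

lemma distribution_le_of_lowerBoyd {p c : ℝ} (hp : 0 < p) (hc : 1 ≤ c)
    (hlow : ∀ a : ℝ, 0 < a → a < 1 → dilNorm E a ≤ ENNReal.ofReal (c * a ^ (-(1 / p))))
    {f : ℝ → ℝ} {A : ℝ} (hA0 : 0 < A)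
    (hA : ENNReal.ofReal c * E.ρ (rearr f) ≤ ENNReal.ofReal A * E.φ 1)
    {lam : ℝ} (hlam : A ≤ lam) :
    distribution f (ENNReal.ofReal lam) ≤ ENNReal.ofReal ((A / lam) ^ p) := by
  have hlam0 : 0 < lam := hA0.trans_le hlam
  have hτ : 0 < (A / lam) ^ p := by positivity
  have hτ1 : (A / lam) ^ p ≤ 1 :=
    Real.rpow_le_one (by positivity) ((div_le_one hlam0).2 hlam) hp.le
  have hφ : E.φ 1 ≤ ENNReal.ofReal (c * ((A / lam) ^ p) ^ (-(1 / p))) * E.φ ((A / lam) ^ p) := by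
    simpa [Real.rpow_neg hτ.le, Real.inv_rpow hτ.le] using E.φ_le_of_lowerBoyd hc hlow hτ hτ1
  have := E.rearr_le_of_φ_one_le hτ hφ hA
  rwa [mul_div_rpow_rpow_neg_one_div hA0 hlam0 hp.ne', rearr_le_iff] at this

lemma distribution_le_of_upperBoyd {q c : ℝ} (hq : 0 < q)
    (hup : ∀ a : ℝ, 1 ≤ a → dilNorm E a ≤ ENNReal.ofReal (c * a ^ (-(1 / q))))
    {f : ℝ → ℝ} {A : ℝ} (hA0 : 0 < A)
    (hA : ENNReal.ofReal c * E.ρ (rearr f) ≤ ENNReal.ofReal A * E.φ 1)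
    {lam : ℝ} (hlam0 : 0 < lam) (hlam : lam ≤ A) :
    distribution f (ENNReal.ofReal lam) ≤ ENNReal.ofReal ((A / lam) ^ q) := by
  have hτ : 0 < (A / lam) ^ q := by positivity
  have hτ1 : 1 ≤ (A / lam) ^ q := Real.one_le_rpow ((one_le_div hlam0).2 hlam) hq.le
  have hφ : E.φ 1 ≤ ENNReal.ofReal (c * ((A / lam) ^ q) ^ (-(1 / q))) * E.φ ((A / lam) ^ q) := by
    simpa [Real.rpow_neg hτ.le, Real.inv_rpow hτ.le] using E.φ_le_of_upperBoyd hup one_pos hτ1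
  have := E.rearr_le_of_φ_one_le hτ hφ hA
  rwa [mul_div_rpow_rpow_neg_one_div hA0 hlam0 hq.ne', rearr_le_iff] at this

end RIQBFS

lemma lintegral_Ioc_rpow {a s : ℝ} (ha : 0 < a) (hs : -1 < s) :
    ∫⁻ t in Ioc 0 a, ENNReal.ofReal (t ^ s) = ENNReal.ofReal (a ^ (s + 1) / (s + 1)) := by
  have hint : IntegrableOn (fun t : ℝ => t ^ s) (Ioc 0 a) := by
    simpa [intervalIntegrable_iff_integrableOn_Ioc_of_le ha.le] using
      intervalIntegral.intervalIntegrable_rpow' (a := 0) (b := a) hs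
  rw [← ofReal_integral_eq_lintegral_ofReal hint
    (ae_restrict_of_forall_mem measurableSet_Ioc fun t ht => Real.rpow_nonneg ht.1.le s),
    ← intervalIntegral.integral_of_le ha.le, integral_rpow (Or.inl hs),
    Real.zero_rpow (by linarith), sub_zero]

lemma lintegral_Ioi_rpow {a s : ℝ} (ha : 0 < a) (hs : s < -1) :
    ∫⁻ t in Ioi a, ENNReal.ofReal (t ^ s) = ENNReal.ofReal (-a ^ (s + 1) / (s + 1)) := by
  rw [← ofReal_integral_eq_lintegral_ofReal (integrableOn_Ioi_rpow_of_lt hs ha)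
    (ae_restrict_of_forall_mem measurableSet_Ioi fun t (ht : a < t) =>
      Real.rpow_nonneg (ha.trans ht).le s), integral_Ioi_rpow_of_lt hs ha]

lemma ofReal_div_rpow_mul_rpow {A lam p s : ℝ} (hA : 0 ≤ A) (hlam : 0 < lam) :
    ENNReal.ofReal ((A / lam) ^ p) * ENNReal.ofReal (lam ^ s) =
      ENNReal.ofReal (A ^ p) * ENNReal.ofReal (lam ^ (s - p)) := by
  rw [← ENNReal.ofReal_mul (by positivity), ← ENNReal.ofReal_mul (by positivity),
    Real.div_rpow hA hlam.le, Real.rpow_sub hlam, mul_comm_div]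

lemma indicator_lt_abs_add_indicator_abs_le {α : Type*} (f : α → ℝ) (A : ℝ) :
    {s | A < |f s|}.indicator f + {s | |f s| ≤ A}.indicator f = f := by
  ext s
  by_cases hs : A < |f s|
  · simp [hs, not_le.2 hs]
  · simp [hs, not_lt.1 hs]

lemma setOf_lt_abs_indicator_lt_abs {α : Type*} (f : α → ℝ) (A : ℝ) {lam : ℝ} (hlam : 0 ≤ lam) :
    {s | lam < |{s | A < |f s|}.indicator f s|} = {s | max A lam < |f s|} := by
  ext s
  by_cases hs : A < |f s|
  · simp [hs]
  · simp [hs, hlam]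

lemma setOf_lt_abs_indicator_abs_le {α : Type*} (f : α → ℝ) (A : ℝ) {lam : ℝ} (hlam : 0 ≤ lam) :
    {s | lam < |{s | |f s| ≤ A}.indicator f s|} = {s | lam < |f s| ∧ |f s| ≤ A} := by
  ext s
  by_cases hs : |f s| ≤ A
  · simp [hs]
  · simp [hs, hlam]

section LayerCake

variable {α : Type*} [MeasurableSpace α] {μ : Measure α}

lemma eLpNorm_le_of_lintegral_meas_lt_le {g : α → ℝ} (hg : Measurable g) {r A K : ℝ}
    (hr : 0 < r) (hA : 0 ≤ A) (hK : 0 ≤ K)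
    (h : ENNReal.ofReal r * ∫⁻ lam in Ioi 0, μ {s | lam < |g s|} * ENNReal.ofReal (lam ^ (r - 1))
      ≤ ENNReal.ofReal (A ^ r * K)) :
    eLpNorm g (ENNReal.ofReal r) μ ≤ ENNReal.ofReal (A * K ^ (1 / r)) := by
  have hlayer : ∫⁻ s, ‖g s‖ₑ ^ r ∂μ =
      ENNReal.ofReal r * ∫⁻ lam in Ioi 0, μ {s | lam < |g s|} * ENNReal.ofReal (lam ^ (r - 1)) := by
    rw [← lintegral_rpow_eq_lintegral_meas_lt_mul μ (ae_of_all _ fun s => abs_nonneg (g s))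
      hg.abs.aemeasurable hr]
    congr 1
    ext s
    rw [Real.enorm_eq_ofReal_abs, ENNReal.ofReal_rpow_of_nonneg (abs_nonneg _) hr.le]
  rw [eLpNorm_eq_lintegral_rpow_enorm_toReal (by simp [hr]) ENNReal.ofReal_ne_top,
    ENNReal.toReal_ofReal hr.le, hlayer]
  calc (ENNReal.ofReal r * ∫⁻ lam in Ioi 0, μ {s | lam < |g s|} * ENNReal.ofReal (lam ^ (r - 1)))
        ^ (1 / r) ≤ ENNReal.ofReal (A ^ r * K) ^ (1 / r) := by gcongr
    _ = ENNReal.ofReal (A * K ^ (1 / r)) := by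
        rw [ENNReal.ofReal_rpow_of_nonneg (by positivity) (by positivity),
          Real.mul_rpow (by positivity) hK, ← Real.rpow_mul hA, mul_one_div_cancel hr.ne',
          Real.rpow_one]

lemma eLpNorm_indicator_lt_abs_le {f : α → ℝ} (hf : Measurable f) {r p A : ℝ} (hr : 0 < r)
    (hrp : r < p) (hA : 0 < A)
    (hdist : ∀ lam, A ≤ lam → μ {s | lam < |f s|} ≤ ENNReal.ofReal ((A / lam) ^ p)) :
    eLpNorm ({s | A < |f s|}.indicator f) (ENNReal.ofReal r) μ ≤
      ENNReal.ofReal (A * (p / (p - r)) ^ (1 / r)) := by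
  set S := {s | A < |f s|}
  have hS : MeasurableSet S := measurableSet_lt measurable_const hf.abs
  have hpr : 0 < p - r := by linarith
  refine eLpNorm_le_of_lintegral_meas_lt_le (hf.indicator hS) hr hA.le
    (div_nonneg (by linarith) hpr.le) ?_
  have hIoc : ∫⁻ lam in Ioc 0 A, ENNReal.ofReal (lam ^ (r - 1)) = ENNReal.ofReal (A ^ r / r) := by
    rw [lintegral_Ioc_rpow hA (by linarith), sub_add_cancel]
  have hIoi : ∫⁻ lam in Ioi A, ENNReal.ofReal (lam ^ (r - 1 - p)) =
      ENNReal.ofReal (A ^ (r - p) / (p - r)) := by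
    rw [lintegral_Ioi_rpow hA (by linarith), show r - 1 - p + 1 = r - p by ring, neg_div,
      ← div_neg, neg_sub]
  rw [← Ioc_union_Ioi_eq_Ioi hA.le, lintegral_union measurableSet_Ioi Ioc_disjoint_Ioi_same]
  calc ENNReal.ofReal r * ((∫⁻ lam in Ioc 0 A, μ {s | lam < |S.indicator f s|} *
          ENNReal.ofReal (lam ^ (r - 1))) +
        ∫⁻ lam in Ioi A, μ {s | lam < |S.indicator f s|} * ENNReal.ofReal (lam ^ (r - 1)))
      ≤ ENNReal.ofReal r * ((∫⁻ lam in Ioc 0 A, ENNReal.ofReal (lam ^ (r - 1))) +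
        ∫⁻ lam in Ioi A, ENNReal.ofReal (A ^ p) * ENNReal.ofReal (lam ^ (r - 1 - p))) := by
        refine mul_le_mul_right (add_le_add ?_ ?_) _
        · refine setLIntegral_mono' measurableSet_Ioc fun lam hlam => ?_
          rw [setOf_lt_abs_indicator_lt_abs f A hlam.1.le, max_eq_left hlam.2]
          refine mul_le_of_le_one_left zero_le ?_
          simpa [div_self hA.ne'] using hdist A le_rfl
        · refine setLIntegral_mono' measurableSet_Ioi fun lam (hlam : A < lam) => ?_
          rw [setOf_lt_abs_indicator_lt_abs f A (hA.trans hlam).le, max_eq_right hlam.le,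
            ← ofReal_div_rpow_mul_rpow hA.le (hA.trans hlam)]
          gcongr
          exact hdist lam hlam.le
    _ = ENNReal.ofReal (r * (A ^ r / r + A ^ p * (A ^ (r - p) / (p - r)))) := by
        rw [lintegral_const_mul' _ _ ENNReal.ofReal_ne_top, hIoc, hIoi,
          ← ENNReal.ofReal_mul (by positivity),
          ← ENNReal.ofReal_add (by positivity) (by positivity),
          ← ENNReal.ofReal_mul hr.le]
    _ = ENNReal.ofReal (A ^ r * (p / (p - r))) := by
        congr 1
        rw [mul_div_assoc', ← Real.rpow_add hA, add_sub_cancel]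
        field_simp
        ring

lemma eLpNorm_indicator_abs_le_le {f : α → ℝ} (hf : Measurable f) {q r A : ℝ} (hq : 0 < q)
    (hqr : q < r) (hA : 0 < A)
    (hdist : ∀ lam, 0 < lam → lam ≤ A → μ {s | lam < |f s|} ≤ ENNReal.ofReal ((A / lam) ^ q)) :
    eLpNorm ({s | |f s| ≤ A}.indicator f) (ENNReal.ofReal r) μ ≤
      ENNReal.ofReal (A * (r / (r - q)) ^ (1 / r)) := by
  set S := {s | |f s| ≤ A}
  have hS : MeasurableSet S := measurableSet_le hf.abs measurable_const
  have hr : 0 < r := hq.trans hqr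
  have hrq : 0 < r - q := by linarith
  refine eLpNorm_le_of_lintegral_meas_lt_le (hf.indicator hS) hr hA.le
    (div_nonneg hr.le hrq.le) ?_
  have hIoc : ∫⁻ lam in Ioc 0 A, ENNReal.ofReal (lam ^ (r - 1 - q)) =
      ENNReal.ofReal (A ^ (r - q) / (r - q)) := by
    rw [lintegral_Ioc_rpow hA (by linarith), show r - 1 - q + 1 = r - q by ring]
  rw [← Ioc_union_Ioi_eq_Ioi hA.le, lintegral_union measurableSet_Ioi Ioc_disjoint_Ioi_same]
  calc ENNReal.ofReal r * ((∫⁻ lam in Ioc 0 A, μ {s | lam < |S.indicator f s|} *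
          ENNReal.ofReal (lam ^ (r - 1))) +
        ∫⁻ lam in Ioi A, μ {s | lam < |S.indicator f s|} * ENNReal.ofReal (lam ^ (r - 1)))
      ≤ ENNReal.ofReal r * ((∫⁻ lam in Ioc 0 A,
          ENNReal.ofReal (A ^ q) * ENNReal.ofReal (lam ^ (r - 1 - q))) + ∫⁻ _ in Ioi A, 0) := by
        refine mul_le_mul_right (add_le_add ?_ ?_) _
        · refine setLIntegral_mono' measurableSet_Ioc fun lam hlam => ?_
          rw [setOf_lt_abs_indicator_abs_le f A hlam.1.le, ← ofReal_div_rpow_mul_rpow hA.le hlam.1]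
          gcongr
          exact (measure_mono fun s hs => hs.1).trans (hdist lam hlam.1 hlam.2)
        · refine setLIntegral_mono' measurableSet_Ioi fun lam (hlam : A < lam) => ?_
          have : {s | lam < |f s| ∧ |f s| ≤ A} = ∅ :=
            eq_empty_of_forall_notMem fun s hs => (hs.2.trans_lt hlam).not_gt hs.1
          rw [setOf_lt_abs_indicator_abs_le f A (hA.trans hlam).le, this, measure_empty, zero_mul]
    _ = ENNReal.ofReal (r * (A ^ q * (A ^ (r - q) / (r - q)))) := by
        rw [lintegral_zero, add_zero, lintegral_const_mul' _ _ ENNReal.ofReal_ne_top, hIoc,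
          ← ENNReal.ofReal_mul (by positivity), ← ENNReal.ofReal_mul hr.le]
    _ = ENNReal.ofReal (A ^ r * (r / (r - q))) := by
        congr 1
        rw [mul_div_assoc', ← Real.rpow_add hA, add_sub_cancel]
        ring

lemma eLpNorm_indicator_abs_le_top_le (f : α → ℝ) {A : ℝ} (hA : 0 ≤ A) :
    eLpNorm ({s | |f s| ≤ A}.indicator f) ⊤ μ ≤ ENNReal.ofReal A := by
  rw [eLpNorm_exponent_top]
  refine eLpNormEssSup_le_of_ae_bound (ae_of_all _ fun s => ?_)
  by_cases hs : s ∈ {s | |f s| ≤ A}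
  · simpa [indicator_of_mem hs] using hs
  · simp [indicator_of_notMem hs, hA]

end LayerCake

lemma exists_one_lt_mul_rpow_neg_lt (C : ℝ) {ε : ℝ} (hε : 0 < ε) :
    ∃ B : ℝ, 1 < B ∧ C * B ^ (-ε) < 1 := by
  have hlim : Tendsto (fun B : ℝ => C * B ^ (-ε)) atTop (nhds 0) := by
    simpa using (tendsto_rpow_neg_atTop hε).const_mul C
  obtain ⟨B, hB, hB1⟩ :=
    ((hlim.eventually (gt_mem_nhds one_pos)).and (eventually_gt_atTop 1)).exists
  exact ⟨B, hB1, hB⟩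

lemma indicator_Ici_rpow_le_tsum {α B : ℝ} (hα : 0 ≤ α) (hB : 1 < B) (u : ℝ) :
    indicator (Ici 1) (fun u => ENNReal.ofReal (u ^ (-α))) u ≤
      ∑' n : ℕ,
        ENNReal.ofReal ((B ^ n) ^ (-α)) * indicator (Ioo 0 (B ^ (n + 1))) (fun _ => 1) u := by
  by_cases hu : 1 ≤ u
  · obtain ⟨n, hn, hn1⟩ := exists_nat_pow_near hu hB
    refine le_trans ?_ (ENNReal.le_tsum n)
    have hmem : u ∈ Ioo 0 (B ^ (n + 1)) := ⟨by linarith, hn1⟩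
    rw [indicator_of_mem (mem_Ici.2 hu), indicator_of_mem hmem, mul_one]
    exact ENNReal.ofReal_le_ofReal
      (Real.rpow_le_rpow_of_nonpos (pow_pos (one_pos.trans hB) n) hn (neg_nonpos.2 hα))
  · simp [indicator_of_notMem (show u ∉ Ici 1 from hu)]

lemma indicator_Iio_rpow_le_tsum {α x : ℝ} (hα : 0 ≤ α) (hx0 : 0 < x) (hx1 : x < 1) {u : ℝ}
    (hu0 : 0 < u) :
    indicator (Iio 1) (fun u => ENNReal.ofReal (u ^ (-α))) u ≤
      ∑' n : ℕ,
        ENNReal.ofReal ((x ^ (n + 1)) ^ (-α)) * indicator (Ioc 0 (x ^ n)) (fun _ => 1) u := by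
  by_cases hu : u < 1
  · obtain ⟨n, hn1, hn⟩ := exists_nat_pow_near_of_lt_one hu0 hu.le hx0 hx1
    refine le_trans ?_ (ENNReal.le_tsum n)
    have hmem : u ∈ Ioc 0 (x ^ n) := ⟨hu0, hn⟩
    rw [indicator_of_mem (mem_Iio.2 hu), indicator_of_mem hmem, mul_one]
    exact ENNReal.ofReal_le_ofReal
      (Real.rpow_le_rpow_of_nonpos (pow_pos hx0 (n + 1)) hn1.le (neg_nonpos.2 hα))
  · simp [indicator_of_notMem (show u ∉ Iio 1 from hu)]

namespace RIQBFS

variable (E : RIQBFS)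

lemma ρ_indicator_Ici_rpow_lt_top {c α β : ℝ}
    (hφ : ∀ t, 1 ≤ t → E.φ t ≤ ENNReal.ofReal (c * t ^ β) * E.φ 1) (hα : 0 ≤ α) (hβα : β < α) :
    E.ρ (indicator (Ici 1) fun u => ENNReal.ofReal (u ^ (-α))) < ⊤ := by
  obtain ⟨B, hB, hBC⟩ := exists_one_lt_mul_rpow_neg_lt E.C (sub_pos.2 hβα)
  have hB0 : 0 < B := one_pos.trans hB
  refine (E.mono _ _ (ae_of_all _ (indicator_Ici_rpow_le_tsum hα hB))).trans_lt
    (E.ρ_tsum_lt_top (ENNReal.mul_ne_top ENNReal.ofReal_ne_top (E.φ_lt_top 1).ne)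
      (D := ENNReal.ofReal (c * B ^ β) * E.φ 1) (r := ENNReal.ofReal (B ^ (β - α)))
      (fun n => ?_) ?_)
  · calc E.ρ (fun u =>
          ENNReal.ofReal ((B ^ n) ^ (-α)) * indicator (Ioo 0 (B ^ (n + 1))) (fun _ => 1) u)
        = ENNReal.ofReal ((B ^ n) ^ (-α)) * E.φ (B ^ (n + 1)) := E.ρ_const_mul _ _
      _ ≤ ENNReal.ofReal ((B ^ n) ^ (-α)) * (ENNReal.ofReal (c * (B ^ (n + 1)) ^ β) * E.φ 1) := by
          gcongr
          exact hφ _ (one_le_pow₀ hB.le)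
      _ = ENNReal.ofReal (c * B ^ β * (B ^ (β - α)) ^ n) * E.φ 1 := by
          rw [← mul_assoc, ← ENNReal.ofReal_mul (by positivity), ← Real.rpow_pow_comm hB0.le,
            ← Real.rpow_pow_comm hB0.le, pow_succ, sub_eq_neg_add, Real.rpow_add hB0, mul_pow]
          ring_nf
      _ = ENNReal.ofReal (c * B ^ β) * E.φ 1 * ENNReal.ofReal (B ^ (β - α)) ^ n := by
          rw [ENNReal.ofReal_mul' (by positivity), ENNReal.ofReal_pow (by positivity)]
          ring
  · rw [← ENNReal.ofReal_mul (by linarith [E.one_le_C]), ENNReal.ofReal_lt_one, ← neg_sub]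
    exact hBC

lemma ρ_indicator_Iio_rpow_lt_top {c α β : ℝ}
    (hφ : ∀ t, 0 < t → t ≤ 1 → E.φ t ≤ ENNReal.ofReal (c * t ^ β) * E.φ 1) (hα : 0 ≤ α)
    (hαβ : α < β) :
    E.ρ (indicator (Iio 1) fun u => ENNReal.ofReal (u ^ (-α))) < ⊤ := by
  obtain ⟨B, hB, hBC⟩ := exists_one_lt_mul_rpow_neg_lt E.C (sub_pos.2 hαβ)
  have hB0 : 0 < B := one_pos.trans hB
  set x := B⁻¹
  have hx0 : 0 < x := inv_pos.2 hB0
  have hx1 : x < 1 := inv_lt_one_of_one_lt₀ hB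
  refine (E.mono _ _ (ae_restrict_of_forall_mem measurableSet_Ioi fun u hu =>
    indicator_Iio_rpow_le_tsum hα hx0 hx1 hu)).trans_lt
    (E.ρ_tsum_lt_top (ENNReal.mul_ne_top ENNReal.ofReal_ne_top (E.φ_lt_top 1).ne)
      (D := ENNReal.ofReal (c * x ^ (-α)) * E.φ 1) (r := ENNReal.ofReal (x ^ (β - α)))
      (fun n => ?_) ?_)
  · calc E.ρ (fun u =>
          ENNReal.ofReal ((x ^ (n + 1)) ^ (-α)) * indicator (Ioc 0 (x ^ n)) (fun _ => 1) u)
        = ENNReal.ofReal ((x ^ (n + 1)) ^ (-α)) * E.φ (x ^ n) := by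
          rw [E.ρ_const_mul, ρ_indicator_Ioc]
      _ ≤ ENNReal.ofReal ((x ^ (n + 1)) ^ (-α)) * (ENNReal.ofReal (c * (x ^ n) ^ β) * E.φ 1) := by
          gcongr
          exact hφ _ (by positivity) (pow_le_one₀ hx0.le hx1.le)
      _ = ENNReal.ofReal (c * x ^ (-α) * (x ^ (β - α)) ^ n) * E.φ 1 := by
          rw [← mul_assoc, ← ENNReal.ofReal_mul (by positivity), ← Real.rpow_pow_comm hx0.le,
            ← Real.rpow_pow_comm hx0.le, pow_succ, sub_eq_add_neg, Real.rpow_add hx0, mul_pow]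
          ring_nf
      _ = ENNReal.ofReal (c * x ^ (-α)) * E.φ 1 * ENNReal.ofReal (x ^ (β - α)) ^ n := by
          rw [ENNReal.ofReal_mul' (by positivity), ENNReal.ofReal_pow (by positivity)]
          ring
  · rw [← ENNReal.ofReal_mul (by linarith [E.one_le_C]), ENNReal.ofReal_lt_one,
      Real.inv_rpow hB0.le, ← Real.rpow_neg hB0.le]
    exact hBC

lemma ρ_indicator_Ici_rpow_lt_top_of_lowerBoyd {p0 p c : ℝ} (hp0 : 0 < p0) (hp0p : p0 < p)
    (hc : 1 ≤ c)
    (hlow : ∀ a : ℝ, 0 < a → a < 1 → dilNorm E a ≤ ENNReal.ofReal (c * a ^ (-(1 / p)))) :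
    E.ρ (indicator (Ici 1) fun u => ENNReal.ofReal (u ^ (-(ENNReal.ofReal p0)⁻¹.toReal))) < ⊤ := by
  rw [ENNReal.toReal_inv, ENNReal.toReal_ofReal hp0.le, ← one_div]
  refine E.ρ_indicator_Ici_rpow_lt_top (c := c) (fun t ht => ?_) (one_div_pos.2 hp0).le
    (one_div_lt_one_div_of_lt hp0 hp0p)
  simpa using E.φ_le_of_lowerBoyd hc hlow one_pos ht

lemma ρ_indicator_Iio_rpow_lt_top_of_upperBoyd {q r c : ℝ} (hq : 0 < q) (hqr : q < r)
    (hup : ∀ a : ℝ, 1 ≤ a → dilNorm E a ≤ ENNReal.ofReal (c * a ^ (-(1 / q)))) :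
    E.ρ (indicator (Iio 1) fun u => ENNReal.ofReal (u ^ (-(ENNReal.ofReal r)⁻¹.toReal))) < ⊤ := by
  have hr : 0 < r := hq.trans hqr
  rw [ENNReal.toReal_inv, ENNReal.toReal_ofReal hr.le, ← one_div]
  refine E.ρ_indicator_Iio_rpow_lt_top (c := c) (fun t ht0 ht1 => ?_) (one_div_pos.2 hr).le
    (one_div_lt_one_div_of_lt hq hqr)
  simpa using E.φ_le_of_upperBoyd hup ht0 ht1

lemma eLpNorm_indicator_lt_abs_le_of_lowerBoyd {p0 p c : ℝ} (hp0 : 0 < p0) (hp0p : p0 < p)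
    (hc : 1 ≤ c)
    (hlow : ∀ a : ℝ, 0 < a → a < 1 → dilNorm E a ≤ ENNReal.ofReal (c * a ^ (-(1 / p))))
    {f : ℝ → ℝ} (hf : Measurable f) {A : ℝ} (hA0 : 0 < A)
    (hA : ENNReal.ofReal c * E.ρ (rearr f) ≤ ENNReal.ofReal A * E.φ 1) :
    eLpNorm ({s | A < |f s|}.indicator f) (ENNReal.ofReal p0) (volume.restrict (Ioi 0)) ≤
      ENNReal.ofReal (A * (p / (p - p0)) ^ (1 / p0)) :=
  eLpNorm_indicator_lt_abs_le hf hp0 hp0p hA0 fun lam hlam => by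
    rw [← distribution_ofReal f (hA0.trans_le hlam).le]
    exact E.distribution_le_of_lowerBoyd (hp0.trans hp0p) hc hlow hA0 hA hlam

lemma eLpNorm_indicator_abs_le_le_of_upperBoyd {q r c : ℝ} (hq : 0 < q) (hqr : q < r)
    (hup : ∀ a : ℝ, 1 ≤ a → dilNorm E a ≤ ENNReal.ofReal (c * a ^ (-(1 / q))))
    {f : ℝ → ℝ} (hf : Measurable f) {A : ℝ} (hA0 : 0 < A)
    (hA : ENNReal.ofReal c * E.ρ (rearr f) ≤ ENNReal.ofReal A * E.φ 1) :
    eLpNorm ({s | |f s| ≤ A}.indicator f) (ENNReal.ofReal r) (volume.restrict (Ioi 0)) ≤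
      ENNReal.ofReal (A * (r / (r - q)) ^ (1 / r)) :=
  eLpNorm_indicator_abs_le_le hf hq hqr hA0 fun lam hlam0 hlam => by
    rw [← distribution_ofReal f hlam0.le]
    exact E.distribution_le_of_upperBoyd hq hup hA0 hA hlam0 hlam

lemma exists_iInf_eLpNorm_add_le {p0 p1 : ℝ≥0∞} {c c' K K' : ℝ} (hc : 0 < c) (hK : 0 < K)
    (hK' : 0 ≤ K')
    (hbig : ∀ f : ℝ → ℝ, Measurable f → ∀ A : ℝ, 0 < A →
      ENNReal.ofReal c * E.ρ (rearr f) ≤ ENNReal.ofReal A * E.φ 1 →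
      eLpNorm ({s | A < |f s|}.indicator f) p0 (volume.restrict (Ioi 0)) ≤ ENNReal.ofReal (A * K))
    (hsmall : ∀ f : ℝ → ℝ, Measurable f → ∀ A : ℝ, 0 < A →
      ENNReal.ofReal c' * E.ρ (rearr f) ≤ ENNReal.ofReal A * E.φ 1 →
      eLpNorm ({s | |f s| ≤ A}.indicator f) p1 (volume.restrict (Ioi 0)) ≤
        ENNReal.ofReal (A * K')) :
    ∃ C : ℝ, 0 < C ∧ ∀ f : ℝ → ℝ, Measurable f → E.ρ (rearr f) < ⊤ →
      (⨅ (g : (ℝ → ℝ) × (ℝ → ℝ)) (_ : g.1 + g.2 = f ∧ Measurable g.1 ∧ Measurable g.2),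
        eLpNorm g.1 p0 (volume.restrict (Ioi 0)) + eLpNorm g.2 p1 (volume.restrict (Ioi 0))) ≤
        ENNReal.ofReal C * E.ρ (rearr f) := by
  set φ1 := (E.φ 1).toReal
  have hφ1 : 0 < φ1 := ENNReal.toReal_pos (E.φ_pos one_pos).ne' (E.φ_lt_top 1).ne
  have hcc' : 0 < max c c' := lt_max_of_lt_left hc
  refine ⟨max c c' * (K + K') / φ1, by positivity, fun f hf hN => ?_⟩
  have hcut (A : ℝ) (hA0 : 0 < A)
      (hA : ENNReal.ofReal (max c c') * E.ρ (rearr f) ≤ ENNReal.ofReal A * E.φ 1) :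
      (⨅ (g : (ℝ → ℝ) × (ℝ → ℝ)) (_ : g.1 + g.2 = f ∧ Measurable g.1 ∧ Measurable g.2),
        eLpNorm g.1 p0 (volume.restrict (Ioi 0)) + eLpNorm g.2 p1 (volume.restrict (Ioi 0))) ≤
        ENNReal.ofReal (A * (K + K')) := by
    refine iInf₂_le_of_le ({s | A < |f s|}.indicator f, {s | |f s| ≤ A}.indicator f)
      ⟨indicator_lt_abs_add_indicator_abs_le f A,
        hf.indicator (measurableSet_lt measurable_const hf.abs),
        hf.indicator (measurableSet_le hf.abs measurable_const)⟩ ?_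
    rw [mul_add, ENNReal.ofReal_add (by positivity) (by positivity)]
    exact add_le_add
      (hbig f hf A hA0 (le_trans (by gcongr; exact le_max_left _ _) hA))
      (hsmall f hf A hA0 (le_trans (by gcongr; exact le_max_right _ _) hA))
  rcases eq_or_ne (E.ρ (rearr f)) 0 with hN0 | hN0
  · -- every level `A > 0` is admissible
    rw [hN0, mul_zero]
    refine ENNReal.le_of_forall_pos_le_add fun ε hε _ => ?_
    have hKK : 0 < K + K' := by positivity
    have := hcut (ε / (K + K')) (by positivity) (by simp [hN0])
    rwa [div_mul_cancel₀ _ hKK.ne', ENNReal.ofReal_coe_nnreal, ← zero_add (ε : ℝ≥0∞)] at this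
  · set A := max c c' * (E.ρ (rearr f)).toReal / φ1
    have hA0 : 0 < A := by
      have := ENNReal.toReal_pos hN0 hN.ne
      positivity
    have hA : ENNReal.ofReal (max c c') * E.ρ (rearr f) = ENNReal.ofReal A * E.φ 1 := by
      rw [← ENNReal.ofReal_toReal (E.φ_lt_top 1).ne, ← ENNReal.ofReal_mul hA0.le,
        div_mul_cancel₀ _ hφ1.ne', ENNReal.ofReal_mul hcc'.le, ENNReal.ofReal_toReal hN.ne]
    refine (hcut A hA0 hA.le).trans_eq ?_
    rw [← ENNReal.ofReal_toReal hN.ne, ← ENNReal.ofReal_mul (by positivity)]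
    congr 1
    ring

lemma exists_ρ_rearr_le_mul_max {p0 p1 : ℝ≥0∞} (hp0 : p0 ≠ 0) (hp1 : p1 ≠ 0)
    (hsmall : E.ρ (indicator (Iio 1) fun u => ENNReal.ofReal (u ^ (-p1⁻¹.toReal))) < ⊤)
    (hlarge : E.ρ (indicator (Ici 1) fun u => ENNReal.ofReal (u ^ (-p0⁻¹.toReal))) < ⊤) :
    ∃ C : ℝ, 0 < C ∧ ∀ f : ℝ → ℝ, Measurable f →
      E.ρ (rearr f) ≤ ENNReal.ofReal C *
        max (eLpNorm f p0 (volume.restrict (Ioi 0))) (eLpNorm f p1 (volume.restrict (Ioi 0))) := by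
  set h : ℝ → ℝ≥0∞ := fun u => indicator (Iio 1) (fun u => ENNReal.ofReal (u ^ (-p1⁻¹.toReal))) u +
    indicator (Ici 1) (fun u => ENNReal.ofReal (u ^ (-p0⁻¹.toReal))) u
  have hh : E.ρ h < ⊤ := (E.quasi_triangle _ _).trans_lt
    (ENNReal.mul_lt_top ENNReal.ofReal_lt_top (ENNReal.add_lt_top.2 ⟨hsmall, hlarge⟩))
  refine ⟨(E.ρ h).toReal + 1, by positivity, fun f hf => ?_⟩
  set M := max (eLpNorm f p0 (volume.restrict (Ioi 0))) (eLpNorm f p1 (volume.restrict (Ioi 0)))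
  have hdom : ∀ u, 0 < u → rearr f u ≤ M * h u := by
    intro u hu
    by_cases hu1 : u < 1
    · calc rearr f u ≤ eLpNorm f p1 (volume.restrict (Ioi 0)) *
            ENNReal.ofReal (u ^ (-p1⁻¹.toReal)) :=
            rearr_le_eLpNorm_mul_rpow hf.aestronglyMeasurable hp1 hu
        _ ≤ M * h u := by
            gcongr
            · exact le_max_right _ _
            · simp [h, hu1, not_le.2 hu1]
    · calc rearr f u ≤ eLpNorm f p0 (volume.restrict (Ioi 0)) *
            ENNReal.ofReal (u ^ (-p0⁻¹.toReal)) :=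
            rearr_le_eLpNorm_mul_rpow hf.aestronglyMeasurable hp0 hu
        _ ≤ M * h u := by
            gcongr
            · exact le_max_left _ _
            · simp [h, hu1, not_lt.1 hu1]
  calc E.ρ (rearr f) ≤ E.ρ (fun u => M * h u) :=
        E.mono _ _ (ae_restrict_of_forall_mem measurableSet_Ioi hdom)
    _ = E.ρ h * M := by rw [E.ρ_const_mul, mul_comm]
    _ ≤ ENNReal.ofReal ((E.ρ h).toReal + 1) * M := by
        gcongr
        rw [ENNReal.ofReal_add ENNReal.toReal_nonneg zero_le_one, ENNReal.ofReal_toReal hh.ne]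
        exact le_self_add

end RIQBFS

/-- Let `E` be a r.i. quasi-Banach function space with Boyd indices `p_E, q_E`, let
`0 < p₀ < p_E`, and assume either `q_E < p₁ < ∞` or `p₁ = ∞`. Then the continuous
embeddings `L_{p₀} ∩ L_{p₁} ⊂ E ⊂ L_{p₀} + L_{p₁}` hold. -/
theorem stmt12 (E : RIQBFS) (p0 : ℝ) (p1 : ℝ≥0∞)
    (hp0 : 0 < p0) (hp0E : ENNReal.ofReal p0 < lowerBoyd E)
    (hp1 : (upperBoyd E < p1 ∧ p1 ≠ ⊤) ∨ p1 = ⊤) :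
    (∃ c : ℝ, 0 < c ∧ ∀ f : ℝ → ℝ, Measurable f → E.ρ (rearr f) < ⊤ →
      (⨅ (g : (ℝ → ℝ) × (ℝ → ℝ)) (_ : g.1 + g.2 = f ∧ Measurable g.1 ∧ Measurable g.2),
          eLpNorm g.1 (ENNReal.ofReal p0) (volume.restrict (Set.Ioi (0 : ℝ))) +
            eLpNorm g.2 p1 (volume.restrict (Set.Ioi (0 : ℝ)))) ≤
        ENNReal.ofReal c * E.ρ (rearr f)) ∧
    (∃ C : ℝ, 0 < C ∧ ∀ f : ℝ → ℝ, Measurable f →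
      eLpNorm f (ENNReal.ofReal p0) (volume.restrict (Set.Ioi (0 : ℝ))) < ⊤ →
      eLpNorm f p1 (volume.restrict (Set.Ioi (0 : ℝ))) < ⊤ →
      E.ρ (rearr f) ≤ ENNReal.ofReal C *
        max (eLpNorm f (ENNReal.ofReal p0) (volume.restrict (Set.Ioi (0 : ℝ))))
          (eLpNorm f p1 (volume.restrict (Set.Ioi (0 : ℝ))))) := by
  obtain ⟨p, c, hp0p, hc, hlow⟩ := E.exists_lowerBoyd_bound hp0 hp0E
  have hbig := fun f hf A hA0 hA =>
    E.eLpNorm_indicator_lt_abs_le_of_lowerBoyd hp0 hp0p hc hlow (f := f) hf (A := A) hA0 hA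
  have hK : 0 < (p / (p - p0)) ^ (1 / p0) :=
    Real.rpow_pos_of_pos (div_pos (hp0.trans hp0p) (sub_pos.2 hp0p)) _
  have hlarge := E.ρ_indicator_Ici_rpow_lt_top_of_lowerBoyd hp0 hp0p hc hlow
  have hp0' : ENNReal.ofReal p0 ≠ 0 := by simpa using hp0
  rcases hp1 with ⟨hq, hp1⟩ | rfl
  · obtain ⟨r, rfl⟩ : ∃ r, p1 = ENNReal.ofReal r := ⟨p1.toReal, (ENNReal.ofReal_toReal hp1).symm⟩
    obtain ⟨q, c', hq0, hqr, hup⟩ := E.exists_upperBoyd_bound hq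
    have hqr : q < r := (ENNReal.ofReal_lt_ofReal_iff'.1 hqr).1
    have hr : 0 < r := hq0.trans hqr
    obtain ⟨C, hC, hCf⟩ := E.exists_ρ_rearr_le_mul_max hp0' (by simpa using hr)
      (E.ρ_indicator_Iio_rpow_lt_top_of_upperBoyd hq0 hqr hup) hlarge
    refine ⟨E.exists_iInf_eLpNorm_add_le (one_pos.trans_le hc) hK
      (Real.rpow_nonneg (div_nonneg hr.le (sub_pos.2 hqr).le) _) hbig
      (fun f hf A hA0 hA => E.eLpNorm_indicator_abs_le_le_of_upperBoyd hq0 hqr hup hf hA0 hA),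
      C, hC, fun f hf _ _ => hCf f hf⟩
  · have hsmall : E.ρ (indicator (Iio 1)
        fun u => ENNReal.ofReal (u ^ (-(⊤ : ℝ≥0∞)⁻¹.toReal))) < ⊤ := by
      simpa [E.ρ_indicator_Iio] using E.φ_lt_top 1
    obtain ⟨C, hC, hCf⟩ := E.exists_ρ_rearr_le_mul_max hp0' ENNReal.top_ne_zero hsmall hlarge
    refine ⟨E.exists_iInf_eLpNorm_add_le (one_pos.trans_le hc) hK zero_le_one hbig
      (c' := c) (fun f _ A hA0 _ => by simpa using eLpNorm_indicator_abs_le_top_le f hA0.le),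
      C, hC, fun f hf _ _ => hCf f hf⟩
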